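/- (Channel-merging inequality.) Define g : (0,∞) → ℝ by g(x) = x·log(1 + 1/x²), and let λ ∈ (0,1) and a, b > 0 satisfy a/λ ≤ 1 and b/(1−λ) ≤ 1. Then λ·g(a/λ) + (1−λ)·g(b/(1−λ)) ≤ g(a + b). In particular, since λ·(a/λ) + (1−λ)·(b/(1−λ)) = a + b ≤ 1, the inequality follows from the concavity of g on (0,1]. -/

import Mathlib

/-- The function `g x = x log (1 + 1/x²)` from the generalized water-filling
analysis. -/
noncomputable def gWF (x : ℝ) : ℝ := x * Real.log (1 + 1 / x ^ 2)

open Real Set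

theorem ConcaveOn.perspective_add_perspective_le {s : Set ℝ} {f : ℝ → ℝ} (hf : ConcaveOn ℝ s f)
    {lam a b : ℝ} (hlam : lam ∈ Ioo (0 : ℝ) 1) (ha : a / lam ∈ s) (hb : b / (1 - lam) ∈ s) :
    lam * f (a / lam) + (1 - lam) * f (b / (1 - lam)) ≤ f (a + b) := by
  obtain ⟨hlam₀, hlam₁⟩ := hlam
  have hcompl : 0 < 1 - lam := sub_pos.mpr hlam₁
  have h := hf.2 ha hb hlam₀.le hcompl.le (add_sub_cancel lam 1)
  rwa [smul_eq_mul, smul_eq_mul, smul_eq_mul, smul_eq_mul, mul_div_cancel₀ a hlam₀.ne',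
    mul_div_cancel₀ b hcompl.ne'] at h

theorem hasDerivAt_log_one_add_one_div_sq {x : ℝ} (hx : 0 < x) :
    HasDerivAt (fun y ↦ log (1 + 1 / y ^ 2)) (-2 / (x * (x ^ 2 + 1))) x := by
  have hinv : HasDerivAt (fun y : ℝ ↦ 1 + 1 / y ^ 2) (-(2 * x) / (x ^ 2) ^ 2) x := by
    simpa using ((hasDerivAt_pow 2 x).fun_inv (by positivity)).const_add 1
  convert hinv.log (by positivity) using 1
  field_simp

theorem hasDerivAt_gWF {x : ℝ} (hx : 0 < x) :
    HasDerivAt gWF (log (1 + 1 / x ^ 2) - 2 / (x ^ 2 + 1)) x :=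
  ((hasDerivAt_id' x).fun_mul (hasDerivAt_log_one_add_one_div_sq hx)).congr_deriv <| by
    field_simp
    ring

theorem hasDerivAt_deriv_gWF {x : ℝ} (hx : 0 < x) :
    HasDerivAt (fun y ↦ log (1 + 1 / y ^ 2) - 2 / (y ^ 2 + 1))
      (2 * (x ^ 2 - 1) / (x * (x ^ 2 + 1) ^ 2)) x :=
  ((hasDerivAt_log_one_add_one_div_sq hx).fun_sub ((hasDerivAt_const x 2).fun_div
    ((hasDerivAt_pow 2 x).add_const 1) (by positivity))).congr_deriv <| by
    field_simp
    ring

theorem concaveOn_gWF : ConcaveOn ℝ (Ioc 0 1) gWF := by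
  have hpos : ∀ x ∈ interior (Ioc (0 : ℝ) 1), 0 < x := fun x hx ↦ (interior_subset hx).1
  refine concaveOn_of_hasDerivWithinAt2_nonpos (convex_Ioc 0 1)
    (fun x hx ↦ (hasDerivAt_gWF hx.1).continuousAt.continuousWithinAt)
    (fun x hx ↦ (hasDerivAt_gWF (hpos x hx)).hasDerivWithinAt)
    (fun x hx ↦ (hasDerivAt_deriv_gWF (hpos x hx)).hasDerivWithinAt) ?_
  rw [interior_Ioc]
  rintro x ⟨hx₀, hx₁⟩
  exact div_nonpos_of_nonpos_of_nonneg (by nlinarith) (by positivity)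

/-- Channel-merging inequality: for `λ ∈ (0,1)` and `a, b > 0`
with `a/λ ≤ 1` and `b/(1−λ) ≤ 1`, one has
`λ g(a/λ) + (1−λ) g(b/(1−λ)) ≤ g(a+b)`. -/
theorem stmt_19 (lam a b : ℝ) (hlam : lam ∈ Set.Ioo (0 : ℝ) 1)
    (ha : 0 < a) (hb : 0 < b)
    (ha1 : a / lam ≤ 1) (hb1 : b / (1 - lam) ≤ 1) :
    lam * gWF (a / lam) + (1 - lam) * gWF (b / (1 - lam)) ≤ gWF (a + b) :=
  concaveOn_gWF.perspective_add_perspective_le hlam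
    ⟨div_pos ha hlam.1, ha1⟩ ⟨div_pos hb (sub_pos.mpr hlam.2), hb1⟩
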